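/- Let F : ℝ → ℝ be continuous and let u be a C² solution of u_xx + u_yy = x^{−2}F(u) on an open set Ω ⊆ {x > 0}. Define the inversion v(x,y) := u(x/(x²+y²), y/(x²+y²)) on the open set of (x,y) with x > 0 and (x/(x²+y²), y/(x²+y²)) ∈ Ω. Then v_xx + v_yy = x^{−2}F(v) on that set. -/

import Mathlib

/-- Partial derivative in the first variable. -/
noncomputable def pdx (f : ℝ → ℝ → ℝ) (x y : ℝ) : ℝ := deriv (fun x' => f x' y) x

/-- Partial derivative in the second variable. -/
noncomputable def pdy (f : ℝ → ℝ → ℝ) (x y : ℝ) : ℝ := deriv (fun y' => f x y') y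

/-!
The chain rule gives, for `v = u ∘ φ`, `Δv = Δφ₁ ∂₁u + Δφ₂ ∂₂u + |∇φ₁|² ∂₁₁u + |∇φ₂|² ∂₂₂u +
(∇φ₁ · ∇φ₂)(∂₁₂u + ∂₂₁u)` (no symmetry of the mixed partials is needed). For the inversion
`φ(z) = z / |z|²` both components are harmonic, their gradients are orthogonal and both have squared
length `|z|⁻⁴`, so `Δv(z) = |z|⁻⁴ (Δu)(φ z)`. Since `φ₁(z) = x / |z|²`, the weight `φ₁(z)⁻²` coming
from the equation for `u` is `|z|⁴ x⁻²`, and the two powers of `|z|` cancel.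
-/

open Function Filter Topology

theorem pdx_flip (f : ℝ → ℝ → ℝ) : pdx (flip f) = flip (pdy f) := rfl

theorem pdy_flip (f : ℝ → ℝ → ℝ) : pdy (flip f) = flip (pdx f) := rfl

theorem hasDerivAt_pdx {φ : ℝ → ℝ → ℝ} {x y : ℝ} (hφ : ContDiffAt ℝ 2 (fun t => φ t y) x) :
    HasDerivAt (fun t => pdx φ t y) (pdx (pdx φ) x y) x :=
  ((hφ.fderiv_right (m := 1) le_rfl).clm_apply contDiffAt_const).differentiableAt
    one_ne_zero |>.hasDerivAt

theorem pdx_eq_fderiv {u : ℝ → ℝ → ℝ} {x y : ℝ} (hu : DifferentiableAt ℝ (uncurry u) (x, y)) :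
    pdx u x y = fderiv ℝ (uncurry u) (x, y) (1, 0) :=
  (hu.hasFDerivAt.comp_hasDerivAt (f := fun t => (t, y)) x
    ((hasDerivAt_id' x).prodMk (hasDerivAt_const x y))).deriv

theorem pdy_eq_fderiv {u : ℝ → ℝ → ℝ} {x y : ℝ} (hu : DifferentiableAt ℝ (uncurry u) (x, y)) :
    pdy u x y = fderiv ℝ (uncurry u) (x, y) (0, 1) :=
  (hu.hasFDerivAt.comp_hasDerivAt (f := fun t => (x, t)) y
    ((hasDerivAt_const y x).prodMk (hasDerivAt_id' y))).deriv

theorem hasDerivAt_comp_pair {u : ℝ → ℝ → ℝ} {g h : ℝ → ℝ} {g' h' t : ℝ}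
    (hu : DifferentiableAt ℝ (uncurry u) (g t, h t)) (hg : HasDerivAt g g' t)
    (hh : HasDerivAt h h' t) :
    HasDerivAt (fun s => u (g s) (h s)) (g' * pdx u (g t) (h t) + h' * pdy u (g t) (h t)) t := by
  have hsplit : ((g', h') : ℝ × ℝ) = g' • (1, 0) + h' • (0, 1) := by simp
  refine (hu.hasFDerivAt.comp_hasDerivAt t (hg.prodMk hh)).congr_deriv ?_
  rw [hsplit, map_add, map_smul, map_smul, pdx_eq_fderiv hu, pdy_eq_fderiv hu, smul_eq_mul,
    smul_eq_mul]

theorem hasDerivAt_comp_left {u φ₁ φ₂ : ℝ → ℝ → ℝ} {x y : ℝ}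
    (hu : DifferentiableAt ℝ (uncurry u) (φ₁ x y, φ₂ x y))
    (hφ₁ : DifferentiableAt ℝ (fun t => φ₁ t y) x) (hφ₂ : DifferentiableAt ℝ (fun t => φ₂ t y) x) :
    HasDerivAt (fun t => u (φ₁ t y) (φ₂ t y))
      (pdx φ₁ x y * pdx u (φ₁ x y) (φ₂ x y) + pdx φ₂ x y * pdy u (φ₁ x y) (φ₂ x y)) x :=
  hasDerivAt_comp_pair (g := fun t => φ₁ t y) (h := fun t => φ₂ t y) hu hφ₁.hasDerivAt
    hφ₂.hasDerivAt

theorem pdx_comp {u φ₁ φ₂ : ℝ → ℝ → ℝ} {x y : ℝ}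
    (hu : DifferentiableAt ℝ (uncurry u) (φ₁ x y, φ₂ x y))
    (hφ₁ : DifferentiableAt ℝ (fun t => φ₁ t y) x) (hφ₂ : DifferentiableAt ℝ (fun t => φ₂ t y) x) :
    pdx (fun a b => u (φ₁ a b) (φ₂ a b)) x y =
      pdx φ₁ x y * pdx u (φ₁ x y) (φ₂ x y) + pdx φ₂ x y * pdy u (φ₁ x y) (φ₂ x y) :=
  (hasDerivAt_comp_left hu hφ₁ hφ₂).deriv

theorem contDiffOn_fderiv_apply {W : ℝ × ℝ → ℝ} {Ω : Set (ℝ × ℝ)} {n : WithTop ℕ∞}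
    (hW : ContDiffOn ℝ (n + 1) W Ω) (hΩ : IsOpen Ω) (w : ℝ × ℝ) :
    ContDiffOn ℝ n (fun p => fderiv ℝ W p w) Ω :=
  (hW.fderiv_of_isOpen hΩ le_rfl).clm_apply contDiffOn_const

theorem contDiffOn_pdx {u : ℝ → ℝ → ℝ} {Ω : Set (ℝ × ℝ)} {n : WithTop ℕ∞}
    (hu : ContDiffOn ℝ (n + 1) (uncurry u) Ω) (hΩ : IsOpen Ω) :
    ContDiffOn ℝ n (uncurry (pdx u)) Ω :=
  (contDiffOn_fderiv_apply hu hΩ (1, 0)).congr fun p hp =>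
    pdx_eq_fderiv ((hu.differentiableOn (by simp)).differentiableAt (hΩ.mem_nhds hp))

theorem contDiffOn_pdy {u : ℝ → ℝ → ℝ} {Ω : Set (ℝ × ℝ)} {n : WithTop ℕ∞}
    (hu : ContDiffOn ℝ (n + 1) (uncurry u) Ω) (hΩ : IsOpen Ω) :
    ContDiffOn ℝ n (uncurry (pdy u)) Ω :=
  (contDiffOn_fderiv_apply hu hΩ (0, 1)).congr fun p hp =>
    pdy_eq_fderiv ((hu.differentiableOn (by simp)).differentiableAt (hΩ.mem_nhds hp))

theorem pdx_pdx_comp {u φ₁ φ₂ : ℝ → ℝ → ℝ} {Ω : Set (ℝ × ℝ)}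
    (hu : ContDiffOn ℝ 2 (uncurry u) Ω) (hΩ : IsOpen Ω) {x y : ℝ}
    (hφ₁ : ContDiffAt ℝ 2 (fun t => φ₁ t y) x) (hφ₂ : ContDiffAt ℝ 2 (fun t => φ₂ t y) x)
    (hmem : (φ₁ x y, φ₂ x y) ∈ Ω) :
    pdx (pdx fun a b => u (φ₁ a b) (φ₂ a b)) x y =
      pdx (pdx φ₁) x y * pdx u (φ₁ x y) (φ₂ x y) + pdx (pdx φ₂) x y * pdy u (φ₁ x y) (φ₂ x y) +
      pdx φ₁ x y * (pdx φ₁ x y * pdx (pdx u) (φ₁ x y) (φ₂ x y) +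
        pdx φ₂ x y * pdy (pdx u) (φ₁ x y) (φ₂ x y)) +
      pdx φ₂ x y * (pdx φ₁ x y * pdx (pdy u) (φ₁ x y) (φ₂ x y) +
        pdx φ₂ x y * pdy (pdy u) (φ₁ x y) (φ₂ x y)) := by
  have hΩnear : ∀ᶠ t in 𝓝 x, (φ₁ t y, φ₂ t y) ∈ Ω :=
    (hφ₁.continuousAt.prodMk hφ₂.continuousAt).preimage_mem_nhds (hΩ.mem_nhds hmem)
  have hfirst : (fun t => pdx (fun a b => u (φ₁ a b) (φ₂ a b)) t y) =ᶠ[𝓝 x]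
      fun t => pdx φ₁ t y * pdx u (φ₁ t y) (φ₂ t y) + pdx φ₂ t y * pdy u (φ₁ t y) (φ₂ t y) := by
    filter_upwards [hΩnear, hφ₁.eventually (by simp), hφ₂.eventually (by simp)]
      with t hΩt h₁ h₂
    exact pdx_comp ((hu.contDiffAt (hΩ.mem_nhds hΩt)).differentiableAt two_ne_zero)
      (h₁.differentiableAt two_ne_zero) (h₂.differentiableAt two_ne_zero)
  have hux := hasDerivAt_comp_left
    (((contDiffOn_pdx hu hΩ).contDiffAt (hΩ.mem_nhds hmem)).differentiableAt one_ne_zero)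
    (hφ₁.differentiableAt two_ne_zero) (hφ₂.differentiableAt two_ne_zero)
  have huy := hasDerivAt_comp_left
    (((contDiffOn_pdy hu hΩ).contDiffAt (hΩ.mem_nhds hmem)).differentiableAt one_ne_zero)
    (hφ₁.differentiableAt two_ne_zero) (hφ₂.differentiableAt two_ne_zero)
  rw [pdx, hfirst.deriv_eq]
  refine (((hasDerivAt_pdx hφ₁).mul hux).add ((hasDerivAt_pdx hφ₂).mul huy)).deriv.trans ?_
  ring

theorem pdy_pdy_comp {u φ₁ φ₂ : ℝ → ℝ → ℝ} {Ω : Set (ℝ × ℝ)}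
    (hu : ContDiffOn ℝ 2 (uncurry u) Ω) (hΩ : IsOpen Ω) {x y : ℝ}
    (hφ₁ : ContDiffAt ℝ 2 (fun t => φ₁ x t) y) (hφ₂ : ContDiffAt ℝ 2 (fun t => φ₂ x t) y)
    (hmem : (φ₁ x y, φ₂ x y) ∈ Ω) :
    pdy (pdy fun a b => u (φ₁ a b) (φ₂ a b)) x y =
      pdy (pdy φ₁) x y * pdx u (φ₁ x y) (φ₂ x y) + pdy (pdy φ₂) x y * pdy u (φ₁ x y) (φ₂ x y) +
      pdy φ₁ x y * (pdy φ₁ x y * pdx (pdx u) (φ₁ x y) (φ₂ x y) +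
        pdy φ₂ x y * pdy (pdx u) (φ₁ x y) (φ₂ x y)) +
      pdy φ₂ x y * (pdy φ₁ x y * pdx (pdy u) (φ₁ x y) (φ₂ x y) +
        pdy φ₂ x y * pdy (pdy u) (φ₁ x y) (φ₂ x y)) := by
  have hu' : ContDiffOn ℝ 2 (uncurry (flip u)) (Prod.swap ⁻¹' Ω) :=
    hu.comp (contDiff_snd.prodMk contDiff_fst).contDiffOn fun _ hp => hp
  show pdx (pdx fun a b => flip u (flip φ₂ a b) (flip φ₁ a b)) y x = _
  rw [pdx_pdx_comp (φ₁ := flip φ₂) (φ₂ := flip φ₁) (x := y) (y := x) hu'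
    (hΩ.preimage continuous_swap) hφ₂ hφ₁ hmem]
  simp only [pdx_flip, pdy_flip, flip]
  ring

theorem laplacian_comp {u φ₁ φ₂ : ℝ → ℝ → ℝ} {Ω : Set (ℝ × ℝ)}
    (hu : ContDiffOn ℝ 2 (uncurry u) Ω) (hΩ : IsOpen Ω) {x y : ℝ}
    (hφ₁ : ContDiffAt ℝ 2 (uncurry φ₁) (x, y)) (hφ₂ : ContDiffAt ℝ 2 (uncurry φ₂) (x, y))
    (hmem : (φ₁ x y, φ₂ x y) ∈ Ω) :
    pdx (pdx fun a b => u (φ₁ a b) (φ₂ a b)) x y + pdy (pdy fun a b => u (φ₁ a b) (φ₂ a b)) x y =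
      (pdx (pdx φ₁) x y + pdy (pdy φ₁) x y) * pdx u (φ₁ x y) (φ₂ x y) +
      (pdx (pdx φ₂) x y + pdy (pdy φ₂) x y) * pdy u (φ₁ x y) (φ₂ x y) +
      (pdx φ₁ x y ^ 2 + pdy φ₁ x y ^ 2) * pdx (pdx u) (φ₁ x y) (φ₂ x y) +
      (pdx φ₂ x y ^ 2 + pdy φ₂ x y ^ 2) * pdy (pdy u) (φ₁ x y) (φ₂ x y) +
      (pdx φ₁ x y * pdx φ₂ x y + pdy φ₁ x y * pdy φ₂ x y) *
        (pdy (pdx u) (φ₁ x y) (φ₂ x y) + pdx (pdy u) (φ₁ x y) (φ₂ x y)) := by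
  have horiz : ∀ {f : ℝ → ℝ → ℝ}, ContDiffAt ℝ 2 (uncurry f) (x, y) →
      ContDiffAt ℝ 2 (fun t => f t y) x := fun hf =>
    hf.comp x (contDiffAt_id.prodMk contDiffAt_const)
  have vert : ∀ {f : ℝ → ℝ → ℝ}, ContDiffAt ℝ 2 (uncurry f) (x, y) →
      ContDiffAt ℝ 2 (fun t => f x t) y := fun hf =>
    hf.comp y (contDiffAt_const.prodMk contDiffAt_id)
  rw [pdx_pdx_comp hu hΩ (horiz hφ₁) (horiz hφ₂) hmem,
    pdy_pdy_comp hu hΩ (vert hφ₁) (vert hφ₂) hmem]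
  ring

/-- The first coordinate of `z ↦ z / |z|²`; the second one is `inversionCoord y x`. -/
noncomputable def inversionCoord (x y : ℝ) : ℝ := x / (x ^ 2 + y ^ 2)

section inversionCoord

variable {x y : ℝ}

theorem contDiffAt_inversionCoord {n : WithTop ℕ∞} (h : x ^ 2 + y ^ 2 ≠ 0) :
    ContDiffAt ℝ n (uncurry inversionCoord) (x, y) :=
  contDiffAt_fst.div ((contDiffAt_fst.pow 2).add (contDiffAt_snd.pow 2)) h

theorem hasDerivAt_inversionCoord_left (h : x ^ 2 + y ^ 2 ≠ 0) :
    HasDerivAt (fun t => inversionCoord t y) ((y ^ 2 - x ^ 2) / (x ^ 2 + y ^ 2) ^ 2) x := by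
  have hden : HasDerivAt (fun t : ℝ => t ^ 2 + y ^ 2) (2 * x) x := by
    simpa using (hasDerivAt_pow 2 x).add_const (y ^ 2)
  refine ((hasDerivAt_id' x).div hden h).congr_deriv ?_
  field_simp
  ring

theorem hasDerivAt_inversionCoord_right (h : x ^ 2 + y ^ 2 ≠ 0) :
    HasDerivAt (fun t => inversionCoord x t) (-2 * x * y / (x ^ 2 + y ^ 2) ^ 2) y := by
  have hden : HasDerivAt (fun t : ℝ => x ^ 2 + t ^ 2) (2 * y) y := by
    simpa using (hasDerivAt_pow 2 y).const_add (x ^ 2)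
  refine ((hasDerivAt_const y x).div hden h).congr_deriv ?_
  field_simp
  ring

theorem pdx_inversionCoord (h : x ^ 2 + y ^ 2 ≠ 0) :
    pdx inversionCoord x y = (y ^ 2 - x ^ 2) / (x ^ 2 + y ^ 2) ^ 2 :=
  (hasDerivAt_inversionCoord_left h).deriv

theorem pdy_inversionCoord (h : x ^ 2 + y ^ 2 ≠ 0) :
    pdy inversionCoord x y = -2 * x * y / (x ^ 2 + y ^ 2) ^ 2 :=
  (hasDerivAt_inversionCoord_right h).deriv

theorem pdx_pdx_inversionCoord (h : x ^ 2 + y ^ 2 ≠ 0) :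
    pdx (pdx inversionCoord) x y = (2 * x ^ 3 - 6 * x * y ^ 2) / (x ^ 2 + y ^ 2) ^ 3 := by
  have hfirst : (fun t => pdx inversionCoord t y) =ᶠ[𝓝 x]
      fun t => (y ^ 2 - t ^ 2) / (t ^ 2 + y ^ 2) ^ 2 :=
    ((continuous_id.pow 2).add continuous_const).continuousAt.eventually_ne h |>.mono
      fun t ht => pdx_inversionCoord ht
  have hden : HasDerivAt (fun t : ℝ => (t ^ 2 + y ^ 2) ^ 2) (2 * (x ^ 2 + y ^ 2) * (2 * x)) x := by
    simpa using ((hasDerivAt_pow 2 x).add_const (y ^ 2)).fun_pow 2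
  rw [pdx, hfirst.deriv_eq,
    (((hasDerivAt_pow 2 x).const_sub (y ^ 2)).fun_div hden (pow_ne_zero 2 h)).deriv]
  field_simp
  ring

theorem pdy_pdy_inversionCoord (h : x ^ 2 + y ^ 2 ≠ 0) :
    pdy (pdy inversionCoord) x y = (6 * x * y ^ 2 - 2 * x ^ 3) / (x ^ 2 + y ^ 2) ^ 3 := by
  have hfirst : (fun t => pdy inversionCoord x t) =ᶠ[𝓝 y]
      fun t => -2 * x * t / (x ^ 2 + t ^ 2) ^ 2 :=
    (continuous_const.add (continuous_id.pow 2)).continuousAt.eventually_ne h |>.mono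
      fun t ht => pdy_inversionCoord ht
  have hden : HasDerivAt (fun t : ℝ => (x ^ 2 + t ^ 2) ^ 2) (2 * (x ^ 2 + y ^ 2) * (2 * y)) y := by
    simpa using ((hasDerivAt_pow 2 y).const_add (x ^ 2)).fun_pow 2
  rw [pdy, hfirst.deriv_eq,
    (((hasDerivAt_id' y).const_mul (-2 * x)).fun_div hden (pow_ne_zero 2 h)).deriv]
  field_simp
  ring

theorem laplacian_inversionCoord (h : x ^ 2 + y ^ 2 ≠ 0) :
    pdx (pdx inversionCoord) x y + pdy (pdy inversionCoord) x y = 0 := by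
  rw [pdx_pdx_inversionCoord h, pdy_pdy_inversionCoord h]
  ring

theorem pdx_inversionCoord_sq_add_pdy_sq (h : x ^ 2 + y ^ 2 ≠ 0) :
    pdx inversionCoord x y ^ 2 + pdy inversionCoord x y ^ 2 = 1 / (x ^ 2 + y ^ 2) ^ 2 := by
  rw [pdx_inversionCoord h, pdy_inversionCoord h]
  field_simp
  ring

theorem pdx_inversionCoord_mul_add_pdy_mul (h : x ^ 2 + y ^ 2 ≠ 0) :
    pdx inversionCoord x y * pdy inversionCoord y x +
      pdy inversionCoord x y * pdx inversionCoord y x = 0 := by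
  have h' : y ^ 2 + x ^ 2 ≠ 0 := by rwa [add_comm]
  rw [pdx_inversionCoord h, pdy_inversionCoord h, pdx_inversionCoord h', pdy_inversionCoord h']
  field_simp
  ring

end inversionCoord

theorem laplacian_comp_inversion {u : ℝ → ℝ → ℝ} {Ω : Set (ℝ × ℝ)}
    (hu : ContDiffOn ℝ 2 (uncurry u) Ω) (hΩ : IsOpen Ω) {x y : ℝ} (h : x ^ 2 + y ^ 2 ≠ 0)
    (hmem : (inversionCoord x y, inversionCoord y x) ∈ Ω) :
    pdx (pdx fun a b => u (inversionCoord a b) (inversionCoord b a)) x y +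
        pdy (pdy fun a b => u (inversionCoord a b) (inversionCoord b a)) x y =
      (pdx (pdx u) (inversionCoord x y) (inversionCoord y x) +
        pdy (pdy u) (inversionCoord x y) (inversionCoord y x)) / (x ^ 2 + y ^ 2) ^ 2 := by
  have h' : y ^ 2 + x ^ 2 ≠ 0 := by rwa [add_comm]
  refine (laplacian_comp (φ₂ := flip inversionCoord) hu hΩ (contDiffAt_inversionCoord h)
    ((contDiffAt_inversionCoord h').comp (x, y) (contDiffAt_snd.prodMk contDiffAt_fst))
    hmem).trans ?_
  simp only [pdx_flip, pdy_flip, flip]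
  rw [laplacian_inversionCoord h, add_comm (pdy (pdy _) y x), laplacian_inversionCoord h',
    pdx_inversionCoord_sq_add_pdy_sq h, add_comm (pdy _ y x ^ 2),
    pdx_inversionCoord_sq_add_pdy_sq h', pdx_inversionCoord_mul_add_pdy_mul h, add_comm (y ^ 2)]
  ring

theorem stmt_11_general (F : ℝ → ℝ)
    (Ω : Set (ℝ × ℝ)) (hΩopen : IsOpen Ω)
    (u : ℝ → ℝ → ℝ) (hu : ContDiffOn ℝ 2 (fun p : ℝ × ℝ => u p.1 p.2) Ω)
    (hpde : ∀ x y : ℝ, (x, y) ∈ Ω →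
      pdx (pdx u) x y + pdy (pdy u) x y = x ^ (-2 : ℤ) * F (u x y))
    (v : ℝ → ℝ → ℝ)
    (hv : ∀ x y : ℝ, v x y = u (x / (x ^ 2 + y ^ 2)) (y / (x ^ 2 + y ^ 2))) :
    ∀ x y : ℝ, 0 < x → (x / (x ^ 2 + y ^ 2), y / (x ^ 2 + y ^ 2)) ∈ Ω →
      pdx (pdx v) x y + pdy (pdy v) x y = x ^ (-2 : ℤ) * F (v x y) := by
  intro x y hx hmem
  have hr : x ^ 2 + y ^ 2 ≠ 0 := by positivity
  have hv' : v = fun a b => u (inversionCoord a b) (inversionCoord b a) := by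
    ext a b
    rw [hv, inversionCoord, inversionCoord, add_comm (b ^ 2)]
  have hmem' : (inversionCoord x y, inversionCoord y x) ∈ Ω := by
    rwa [inversionCoord, inversionCoord, add_comm (y ^ 2)]
  rw [hv', laplacian_comp_inversion hu hΩopen hr hmem', hpde _ _ hmem']
  beta_reduce
  rw [show inversionCoord x y = x / (x ^ 2 + y ^ 2) from rfl]
  field_simp

/-- If u solves ∇²u = x⁻²F(u) on an open Ω ⊆ {x>0}, then the inversion
v(x,y) = u(x/(x²+y²), y/(x²+y²)) solves the same equation on the set where
x > 0 and the inverted point lies in Ω. -/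
theorem stmt_11 (F : ℝ → ℝ) (hF : Continuous F)
    (Ω : Set (ℝ × ℝ)) (hΩopen : IsOpen Ω) (hΩsub : Ω ⊆ {p : ℝ × ℝ | 0 < p.1})
    (u : ℝ → ℝ → ℝ) (hu : ContDiffOn ℝ 2 (fun p : ℝ × ℝ => u p.1 p.2) Ω)
    (hpde : ∀ x y : ℝ, (x, y) ∈ Ω →
      pdx (pdx u) x y + pdy (pdy u) x y = x ^ (-2 : ℤ) * F (u x y))
    (v : ℝ → ℝ → ℝ)
    (hv : ∀ x y : ℝ, v x y = u (x / (x ^ 2 + y ^ 2)) (y / (x ^ 2 + y ^ 2))) :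
    ∀ x y : ℝ, 0 < x → (x / (x ^ 2 + y ^ 2), y / (x ^ 2 + y ^ 2)) ∈ Ω →
      pdx (pdx v) x y + pdy (pdy v) x y = x ^ (-2 : ℤ) * F (v x y) :=
  stmt_11_general F Ω hΩopen u hu hpde v hv
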